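/- For any integer k, any positive integer n, and any odd positive integer m, E_{n-1}^{(k)}(x) = ∑_{l=0}^{n-1} C(n-1,l) m^l ∑_{j=1}^{n-l} ∑_{s=0}^{m-1} (-1)^s E_l((s+x)/m) · (1/j^{k-1}) · S_1(n-l,j)/(n-l), where E_l(x) are the ordinary Euler polynomials. -/

import Mathlib

open Finset

noncomputable def eulerNumber : ℕ → ℝ
  | 0 => 1
  | n + 1 => -(1/2) * ∑ l ∈ (range (n+1)).attach, (((n+1).choose l.1 : ℕ) : ℝ) * eulerNumber l.1
  decreasing_by exact mem_range.mp l.2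

/-- Euler polynomials `E_n(x)`, with generating function `2 e^{xt}/(e^t+1)`. -/
noncomputable def eulerPoly (n : ℕ) (x : ℝ) : ℝ :=
  ∑ l ∈ range (n+1), (n.choose l : ℝ) * eulerNumber l * x ^ (n - l)


lemma eulerNumber_zero' : eulerNumber 0 = 1 := by rw [eulerNumber]

lemma eulerNumber_rec (N : ℕ) :
    ∑ l ∈ range (N+1), ((N+1).choose l : ℝ) * eulerNumber l = -2 * eulerNumber (N+1) := by
  rw [eulerNumber, ← Finset.sum_attach (range (N+1)) (fun l => (((N+1).choose l : ℕ) : ℝ) * eulerNumber l)]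
  ring

lemma eulerNumber_full (N : ℕ) (h : 1 ≤ N) :
    ∑ l ∈ range (N+1), (N.choose l : ℝ) * eulerNumber l = -eulerNumber N := by
  obtain ⟨M, rfl⟩ := Nat.exists_eq_succ_of_ne_zero (by omega : N ≠ 0)
  rw [Finset.sum_range_succ, eulerNumber_rec]
  simp
  ring

lemma tri {β : Type*} [AddCommMonoid β] (n : ℕ) (f : ℕ → ℕ → β) :
    ∑ l ∈ range (n+1), ∑ p ∈ range (n+1-l), f l p
      = ∑ p ∈ range (n+1), ∑ l ∈ range (n+1-p), f l p :=
  Finset.sum_comm' (by intro x y; simp only [mem_range]; omega)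

lemma choose_helper {n l p : ℕ} (h : l + p ≤ n) :
    n.choose l * (n-l).choose p = n.choose p * (n-p).choose l := by
  have h1 := Nat.choose_mul (n := n) (Nat.le_add_right l p)
  have h2 := Nat.choose_mul (n := n) (Nat.le_add_left p l)
  have h3 : (l+p).choose l = (l+p).choose p := by
    rw [← Nat.choose_symm (Nat.le_add_right l p)]
    congr 1; omega
  rw [show l + p - l = p by omega] at h1
  rw [show l + p - p = l by omega] at h2
  rw [← h1, ← h2, h3]

lemma eulerPoly_add_one (n : ℕ) (x : ℝ) :
    eulerPoly n (x+1) + eulerPoly n x = 2 * x ^ n := by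
  have expand : eulerPoly n (x+1)
      = ∑ p ∈ range (n+1), ∑ l ∈ range (n+1-p),
          (n.choose l : ℝ) * eulerNumber l * ((n-l).choose p : ℝ) * x ^ p := by
    rw [← tri]
    refine Finset.sum_congr rfl fun l hl => ?_
    have hl' : l ≤ n := by simpa using Nat.lt_succ_iff.mp (mem_range.mp hl)
    rw [add_pow, show n - l + 1 = n + 1 - l by omega, Finset.mul_sum]
    refine Finset.sum_congr rfl fun p hp => ?_
    ring
  rw [expand]
  have reflect : eulerPoly n x
      = ∑ p ∈ range (n+1), (n.choose (n-p) : ℝ) * eulerNumber (n-p) * x ^ p := by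
    unfold eulerPoly
    rw [← Finset.sum_range_reflect]
    refine Finset.sum_congr rfl fun p hp => ?_
    have hp' : p ≤ n := Nat.lt_succ_iff.mp (mem_range.mp hp)
    rw [show n + 1 - 1 - p = n - p by omega, show n - (n - p) = p by omega]
  rw [reflect, ← Finset.sum_add_distrib, Finset.sum_range_succ]
  have hzero : ∀ p ∈ range n,
      (∑ l ∈ range (n+1-p), (n.choose l : ℝ) * eulerNumber l * ((n-l).choose p : ℝ) * x ^ p)
        + (n.choose (n-p) : ℝ) * eulerNumber (n-p) * x ^ p = 0 := by
    intro p hp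
    have hpn : p < n := mem_range.mp hp
    have inner : (∑ l ∈ range (n+1-p), (n.choose l : ℝ) * eulerNumber l * ((n-l).choose p : ℝ))
        = (n.choose p : ℝ) * (- eulerNumber (n-p)) := by
      have : ∀ l ∈ range (n+1-p),
          (n.choose l : ℝ) * eulerNumber l * ((n-l).choose p : ℝ)
            = (n.choose p : ℝ) * (((n-p).choose l : ℝ) * eulerNumber l) := by
        intro l hl
        have hl' : l + p ≤ n := by have := mem_range.mp hl; omega
        have h4 : ((n.choose l:ℝ)) * (((n-l).choose p : ℕ) : ℝ) = (n.choose p:ℝ) * (((n-p).choose l : ℕ):ℝ) := by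
          exact_mod_cast congrArg (fun t : ℕ => (t : ℝ)) (choose_helper hl')
        calc (n.choose l:ℝ) * eulerNumber l * ((n-l).choose p:ℝ)
            = ((n.choose l:ℝ) * ((n-l).choose p:ℝ)) * eulerNumber l := by ring
          _ = ((n.choose p:ℝ) * ((n-p).choose l:ℝ)) * eulerNumber l := by rw [h4]
          _ = (n.choose p:ℝ) * (((n-p).choose l : ℝ) * eulerNumber l) := by ring
      rw [Finset.sum_congr rfl this, ← Finset.mul_sum,
          show n + 1 - p = (n - p) + 1 by omega, eulerNumber_full (n-p) (by omega)]
    have : (∑ l ∈ range (n+1-p), (n.choose l : ℝ) * eulerNumber l * ((n-l).choose p : ℝ) * x ^ p)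
        = (∑ l ∈ range (n+1-p), (n.choose l : ℝ) * eulerNumber l * ((n-l).choose p : ℝ)) * x ^ p := by
      rw [Finset.sum_mul]
    rw [this, inner, Nat.choose_symm (le_of_lt hpn)]
    ring
  rw [Finset.sum_eq_zero hzero]
  simp [eulerNumber_zero']
  ring

noncomputable def eulerP (n : ℕ) : Polynomial ℝ :=
  ∑ l ∈ range (n+1), Polynomial.C ((n.choose l : ℝ) * eulerNumber l) * Polynomial.X ^ (n-l)

lemma eulerP_eval (n : ℕ) (x : ℝ) : (eulerP n).eval x = eulerPoly n x := by
  simp [eulerP, eulerPoly, Polynomial.eval_finset_sum]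

lemma poly_zero (p : Polynomial ℝ) (h : ∀ x : ℝ, p.eval x + p.eval (x+1) = 0) : p = 0 := by
  have hper : ∀ x : ℝ, p.eval (x + 2) = p.eval x := by
    intro x
    have h1 := h x
    have h2 := h (x+1)
    have : x + 1 + 1 = x + 2 := by ring
    rw [this] at h2
    linarith
  have key : ∀ N : ℕ, p.eval (2*(N:ℝ)) = p.eval 0 := by
    intro N
    induction N with
    | zero => norm_num
    | succ N ih =>
        have h5 := hper (2*(N:ℝ))
        push_cast
        rw [show (2:ℝ)*((N:ℝ)+1) = 2*(N:ℝ) + 2 by ring, h5]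
        exact ih
  have hq : p - Polynomial.C (p.eval 0) = 0 := by
    apply Polynomial.eq_zero_of_infinite_isRoot
    apply Set.Infinite.mono (s := Set.range (fun N : ℕ => (2*N : ℝ)))
    · rintro y ⟨N, rfl⟩
      simp [Polynomial.IsRoot, key N]
    · apply Set.infinite_range_of_injective
      intro a b hab
      simp only at hab
      exact_mod_cast (by linarith : (a:ℝ) = b)
  have hp : p = Polynomial.C (p.eval 0) := by linear_combination (norm := abel) hq
  have h0 := h 0
  rw [hp] at h0 ⊢
  simp at h0 ⊢
  linarith

lemma euler_mult (n m : ℕ) (hm : Odd m) (x : ℝ) :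
    (m:ℝ)^n * ∑ s ∈ range m, (-1:ℝ)^s * eulerPoly n (((s:ℝ) + x)/m) = eulerPoly n x := by
  have hmne : m ≠ 0 := by have := Nat.odd_iff.mp hm; omega
  have hm0 : (m:ℝ) ≠ 0 := Nat.cast_ne_zero.mpr hmne
  set Fp : Polynomial ℝ := Polynomial.C ((m:ℝ)^n) *
    ∑ s ∈ range m, Polynomial.C ((-1:ℝ)^s) *
      (eulerP n).comp (Polynomial.C ((s:ℝ)/m) + Polynomial.C (1/(m:ℝ)) * Polynomial.X) with hFp
  have evalF : ∀ y : ℝ, Fp.eval y = (m:ℝ)^n * ∑ s ∈ range m, (-1:ℝ)^s * eulerPoly n (((s:ℝ)+y)/m) := by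
    intro y
    rw [hFp]
    simp only [Polynomial.eval_mul, Polynomial.eval_C, Polynomial.eval_finset_sum,
      Polynomial.eval_comp, Polynomial.eval_add, Polynomial.eval_X, eulerP_eval]
    congr 1
    refine Finset.sum_congr rfl fun s hs => ?_
    congr 2
    field_simp
  have funeq : ∀ y : ℝ, Fp.eval y + Fp.eval (y+1) = 2 * y^n := by
    intro y
    rw [evalF y, evalF (y+1), ← mul_add]
    set g : ℕ → ℝ := fun s => (-1:ℝ)^s * eulerPoly n (((s:ℝ)+y)/m) with hg
    have step : ∀ s ∈ range m, (-1:ℝ)^s * eulerPoly n (((s:ℝ)+(y+1))/m) = -g (s+1) := by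
      intro s _
      rw [hg]
      push_cast
      rw [show ((s:ℝ)+1+y) = ((s:ℝ)+(y+1)) by ring]
      ring
    rw [Finset.sum_congr rfl step]
    have comb : (∑ s ∈ range m, g s) + (∑ s ∈ range m, -g (s+1))
        = g 0 - g m := by
      rw [← Finset.sum_range_sub' g m, ← Finset.sum_add_distrib]
      refine Finset.sum_congr rfl fun s _ => ?_
      ring
    rw [comb, hg]
    simp only []
    rw [hm.neg_one_pow]
    have e1 : ((0:ℕ):ℝ) + y = y := by norm_num
    have e2 : ((m:ℝ) + y)/m = y/m + 1 := by field_simp; ring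
    rw [e1, e2]
    have h2 := eulerPoly_add_one n (y/m)
    have h3 : (-1:ℝ)^0 * eulerPoly n (y/m) - -1 * eulerPoly n (y/m + 1) = 2 * (y/m)^n := by
      norm_num; linarith
    rw [h3, div_pow]
    field_simp
  have hFeq : Fp = eulerP n := by
    have hz : Fp - eulerP n = 0 := by
      apply poly_zero
      intro y
      simp only [Polynomial.eval_sub, eulerP_eval]
      have h1 := funeq y
      have h2 := eulerPoly_add_one n y
      linarith
    linear_combination (norm := abel) hz
  have hx := evalF x
  rw [hFeq, eulerP_eval] at hx
  exact hx.symm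

noncomputable def genocchiNumber : ℕ → ℝ
  | 0 => 0
  | n + 1 => (1/2) * ((if n = 0 then 2 else 0) -
      ∑ l ∈ (range (n+1)).attach, (((n+1).choose l.1 : ℕ) : ℝ) * genocchiNumber l.1)
  decreasing_by exact mem_range.mp l.2

/-- Genocchi polynomials `G_n(x)`, with generating function `2t e^{xt}/(e^t+1)`. -/
noncomputable def genocchiPoly (n : ℕ) (x : ℝ) : ℝ :=
  ∑ l ∈ range (n+1), (n.choose l : ℝ) * genocchiNumber l * x ^ (n - l)

/-- Signed Stirling numbers of the first kind `S₁(n,m)`. -/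
def stirlingS1 : ℕ → ℕ → ℤ
  | 0, 0 => 1
  | 0, _ + 1 => 0
  | _ + 1, 0 => 0
  | n + 1, j + 1 => stirlingS1 n j - n * stirlingS1 n (j + 1)

/-- Poly-Genocchi polynomials `G_n^{(k)}(x)` of index `k`, with generating function
`2 Ei_k(log(1+t)) e^{xt}/(e^t+1)`. -/
noncomputable def polyGenocchiPoly (k : ℤ) (n : ℕ) (x : ℝ) : ℝ :=
  ∑ j ∈ Icc 1 n, (n.choose j : ℝ) *
    (∑ m ∈ Icc 1 j, (stirlingS1 j m : ℝ) / (m : ℝ) ^ (k - 1)) * eulerPoly (n - j) x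

/-- Poly-Euler polynomials `E_n^{(k)}(x) = G_{n+1}^{(k)}(x)/(n+1)`. -/
noncomputable def polyEulerPoly (k : ℤ) (n : ℕ) (x : ℝ) : ℝ :=
  polyGenocchiPoly k (n + 1) x / (n + 1)

noncomputable def polyEulerNumber (k : ℤ) (n : ℕ) : ℝ := polyEulerPoly k n 0

/-- Euler function `Ē_p(x) = E_p(x - ⌊x⌋)`. -/
noncomputable def eulerFun (p : ℕ) (x : ℝ) : ℝ := eulerPoly p (Int.fract x)

/-- Poly-Euler function `Ē_p^{(k)}(x) = E_p^{(k)}(x - ⌊x⌋)`. -/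
noncomputable def polyEulerFun (k : ℤ) (p : ℕ) (x : ℝ) : ℝ := polyEulerPoly k p (Int.fract x)

/-- Dedekind type DC sum `T_p(h,m)`. -/
noncomputable def dcSum (p h m : ℕ) : ℝ :=
  2 * ∑ μ ∈ Icc 1 (m - 1), (-1 : ℝ) ^ μ * ((μ : ℝ) / m) * eulerFun p ((h * μ : ℝ) / m)

/-- Poly-Dedekind type DC sum `T_p^{(k)}(h,m)`. -/
noncomputable def polyDC (k : ℤ) (p h m : ℕ) : ℝ :=
  2 * ∑ μ ∈ Icc 1 (m - 1), (-1 : ℝ) ^ μ * ((μ : ℝ) / m) * polyEulerFun k p ((h * μ : ℝ) / m)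

theorem stmt10 (k : ℤ) (n m : ℕ) (hn : 0 < n) (hm : Odd m) (x : ℝ) :
    polyEulerPoly k (n - 1) x =
      ∑ l ∈ range n, ((n - 1).choose l : ℝ) * (m : ℝ) ^ l *
        ∑ j ∈ Icc 1 (n - l), ∑ s ∈ range m,
          (-1 : ℝ) ^ s * eulerPoly l (((s : ℝ) + x) / m) *
            (1 / (j : ℝ) ^ (k - 1)) * (stirlingS1 (n - l) j : ℝ) / ((n - l : ℕ) : ℝ) := by
  have hmne : m ≠ 0 := by have := Nat.odd_iff.mp hm; omega
  have hn0 : (n:ℝ) ≠ 0 := Nat.cast_ne_zero.mpr (by omega)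
  have hRHS : ∀ l ∈ range n,
      ((n - 1).choose l : ℝ) * (m : ℝ) ^ l *
        ∑ j ∈ Icc 1 (n - l), ∑ s ∈ range m,
          (-1 : ℝ) ^ s * eulerPoly l (((s : ℝ) + x) / m) *
            (1 / (j : ℝ) ^ (k - 1)) * (stirlingS1 (n - l) j : ℝ) / ((n - l : ℕ) : ℝ)
      = ((n - 1).choose l : ℝ) * eulerPoly l x *
          ∑ j ∈ Icc 1 (n-l), (stirlingS1 (n-l) j : ℝ) / (j:ℝ)^(k-1) / ((n-l : ℕ) : ℝ) := by
    intro l hl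
    have fact : (∑ j ∈ Icc 1 (n - l), ∑ s ∈ range m,
          (-1 : ℝ) ^ s * eulerPoly l (((s : ℝ) + x) / m) *
            (1 / (j : ℝ) ^ (k - 1)) * (stirlingS1 (n - l) j : ℝ) / ((n - l : ℕ) : ℝ))
        = (∑ s ∈ range m, (-1:ℝ)^s * eulerPoly l (((s:ℝ)+x)/m)) *
            ∑ j ∈ Icc 1 (n-l), (stirlingS1 (n-l) j : ℝ) / (j:ℝ)^(k-1) / ((n-l : ℕ) : ℝ) := by
      rw [Finset.sum_mul_sum, Finset.sum_comm]
      refine Finset.sum_congr rfl fun j _ => Finset.sum_congr rfl fun s _ => ?_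
      ring
    rw [fact, ← euler_mult l m hm x]
    ring
  have hLHS : polyEulerPoly k (n-1) x = polyGenocchiPoly k n x / (n:ℝ) := by
    unfold polyEulerPoly
    rw [show n - 1 + 1 = n by omega]
    congr 1
    rw [Nat.cast_sub (by omega : 1 ≤ n)]
    ring
  have reindex : ∀ (F : ℕ → ℝ), ∑ j ∈ Icc 1 n, F j = ∑ l ∈ range n, F (n - l) := by
    intro F
    refine Finset.sum_nbij' (fun j => n - j) (fun l => n - l) ?_ ?_ ?_ ?_ ?_ <;>
        intro a ha <;> simp only [mem_Icc, mem_range] at ha ⊢ <;> try omega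
    congr 1
    omega
  have key : polyGenocchiPoly k n x / (n:ℝ)
      = ∑ l ∈ range n, ((n-1).choose l : ℝ) * eulerPoly l x *
          ∑ j ∈ Icc 1 (n-l), (stirlingS1 (n-l) j : ℝ) / (j:ℝ)^(k-1) / ((n-l : ℕ) : ℝ) := by
    unfold polyGenocchiPoly
    rw [reindex, Finset.sum_div]
    refine Finset.sum_congr rfl fun l hl => ?_
    have hln : l < n := mem_range.mp hl
    rw [show n - (n - l) = l by omega]
    have hchoN : n.choose (n-l) * (n - l) = n * (n-1).choose l := by
      have h1 := Nat.choose_succ_right_eq n l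
      have h2 := Nat.add_one_mul_choose_eq (n-1) l
      rw [show n - 1 + 1 = n by omega] at h2
      rw [Nat.choose_symm (by omega : l ≤ n), ← h1]
      exact h2.symm
    have hcho : (n.choose (n-l) : ℝ) * ((n - l : ℕ) : ℝ) = (n:ℝ) * ((n-1).choose l : ℝ) := by
      exact_mod_cast congrArg (fun t : ℕ => (t : ℝ)) hchoN
    have hnl0 : ((n-l:ℕ):ℝ) ≠ 0 := Nat.cast_ne_zero.mpr (by omega)
    rw [← Finset.sum_div]
    set B : ℝ := ∑ j ∈ Icc 1 (n-l), (stirlingS1 (n-l) j : ℝ) / (j:ℝ)^(k-1) with hB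
    field_simp
    linear_combination B * eulerPoly l x * hcho
  rw [hLHS, key]
  exact (Finset.sum_congr rfl hRHS).symm
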